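/- arXiv:2503.14717 — 3 statements merged into one kernel-verified Lean document; each statement's English description precedes it below -/
import Mathlib

section
/- For every real q > 0, the Kolmogorov–Smirnov distance between the standard normal CDF and its scaled version satisfies sup_{t ∈ ℝ} |Φ(q·t) − Φ(t)| ≤ (1/√(2πe)) · (max{q, 1/q} − 1). -/
open MeasureTheory Real

/-- The standard normal cumulative distribution function. -/
noncomputable def Phi (t : ℝ) : ℝ :=
  (Real.sqrt (2 * Real.pi))⁻¹ * ∫ x in Set.Iic t, Real.exp (-x ^ 2 / 2)

/-!
`Φ(qt) - Φ(t)` is the Gaussian density integrated between `t` and `qt`. Both endpoints have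
the sign of `t`, so on that interval the density is at most its value at
`c = min(1, q)|t|`, and the interval has length `|q - 1||t| = (max(q, 1/q) - 1) c`.
The bound follows from `c e^{-c²/2} ≤ e^{-1/2}`.
-/

lemma integrable_exp_neg_sq_div_two : Integrable fun x : ℝ => exp (-x ^ 2 / 2) := by
  convert integrable_exp_neg_mul_sq (by norm_num : (0 : ℝ) < 1 / 2) using 2
  ring_nf

lemma Phi_sub_Phi (a b : ℝ) :
    Phi b - Phi a = (√(2 * π))⁻¹ * ∫ x in a..b, exp (-x ^ 2 / 2) := by
  rw [Phi, Phi, ← mul_sub, intervalIntegral.integral_Iic_sub_Iic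
    integrable_exp_neg_sq_div_two.integrableOn integrable_exp_neg_sq_div_two.integrableOn]

lemma abs_Phi_sub_Phi_le {a b c : ℝ} (hc : ∀ x ∈ Set.uIoc a b, c ^ 2 ≤ x ^ 2) :
    |Phi b - Phi a| ≤ (√(2 * π))⁻¹ * (exp (-c ^ 2 / 2) * |b - a|) := by
  rw [Phi_sub_Phi, abs_mul, abs_of_pos (by positivity), ← Real.norm_eq_abs]
  gcongr
  refine intervalIntegral.norm_integral_le_of_norm_le_const fun x hx => ?_
  rw [Real.norm_of_nonneg (exp_pos _).le, exp_le_exp]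
  linarith [hc x hx]

lemma mul_exp_neg_sq_div_two_le (s : ℝ) : s * exp (-s ^ 2 / 2) ≤ exp (-1 / 2) := by
  have hs : s ≤ exp ((s ^ 2 - 1) / 2) := by
    nlinarith [add_one_le_exp ((s ^ 2 - 1) / 2), sq_nonneg (s - 1)]
  calc s * exp (-s ^ 2 / 2) ≤ exp ((s ^ 2 - 1) / 2) * exp (-s ^ 2 / 2) := by gcongr
    _ = exp (-1 / 2) := by rw [← exp_add]; ring_nf

lemma inv_sqrt_two_pi_mul_exp_neg_half :
    (√(2 * π))⁻¹ * exp (-1 / 2) = (√(2 * π * exp 1))⁻¹ := by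
  rw [sqrt_mul (by positivity : (0 : ℝ) ≤ 2 * π), ← exp_half, mul_inv, ← exp_neg]
  norm_num

lemma one_le_max_self_inv {q : ℝ} (hq : 0 < q) : 1 ≤ max q q⁻¹ := by
  rcases le_total 1 q with h | h
  · exact le_max_of_le_left h
  · exact le_max_of_le_right (one_le_inv₀ hq |>.2 h)

lemma min_one_mul_abs_le_abs {q t x : ℝ} (hq : 0 < q) (hx : x ∈ Set.uIcc t (q * t)) :
    min 1 q * |t| ≤ |x| := by
  rw [Set.mem_uIcc] at hx
  rcases le_total 1 q with h | h <;> rcases le_total 0 t with ht | ht <;>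
    simp only [min_eq_left, min_eq_right, h, abs_of_nonneg, abs_of_nonpos, ht, one_mul] <;>
    rcases hx with ⟨hx₁, hx₂⟩ | ⟨hx₁, hx₂⟩ <;>
    first
    | rw [abs_of_nonneg (by nlinarith)]; nlinarith
    | rw [abs_of_nonpos (by nlinarith)]; nlinarith

lemma abs_mul_sub_self {q : ℝ} (hq : 0 < q) (t : ℝ) :
    |q * t - t| = (max q q⁻¹ - 1) * (min 1 q * |t|) := by
  rw [← sub_one_mul, abs_mul]
  rcases le_total 1 q with h | h
  · rw [abs_of_nonneg (by linarith), max_eq_left ((inv_le_one_of_one_le₀ h).trans h),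
      min_eq_left h, one_mul]
  · rw [abs_of_nonpos (by linarith), max_eq_right (h.trans (one_le_inv₀ hq |>.2 h)),
      min_eq_right h]
    field_simp
    ring

lemma abs_Phi_mul_sub_Phi_le {q : ℝ} (hq : 0 < q) (t : ℝ) :
    |Phi (q * t) - Phi t| ≤ (√(2 * π * exp 1))⁻¹ * (max q q⁻¹ - 1) := by
  set c := min 1 q * |t|
  have hK : 0 ≤ max q q⁻¹ - 1 := sub_nonneg.2 (one_le_max_self_inv hq)
  have hc : ∀ x ∈ Set.uIoc t (q * t), c ^ 2 ≤ x ^ 2 := fun x hx => by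
    simpa only [sq_abs] using pow_le_pow_left₀ (by positivity)
      (min_one_mul_abs_le_abs hq (Set.uIoc_subset_uIcc hx)) 2
  calc |Phi (q * t) - Phi t|
      ≤ (√(2 * π))⁻¹ * (exp (-c ^ 2 / 2) * |q * t - t|) := abs_Phi_sub_Phi_le hc
    _ = (√(2 * π))⁻¹ * ((max q q⁻¹ - 1) * (c * exp (-c ^ 2 / 2))) := by
        rw [abs_mul_sub_self hq]; ring
    _ ≤ (√(2 * π))⁻¹ * ((max q q⁻¹ - 1) * exp (-1 / 2)) := by
        gcongr; exact mul_exp_neg_sq_div_two_le c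
    _ = (√(2 * π * exp 1))⁻¹ * (max q q⁻¹ - 1) := by
        rw [← inv_sqrt_two_pi_mul_exp_neg_half]; ring

/-- For every `q > 0`, `sup_t |Φ(q t) − Φ(t)| ≤ (2πe)^{-1/2} (max{q, 1/q} − 1)`. -/
theorem gaussian_scale_ks_bound (q : ℝ) (hq : 0 < q) :
    ⨆ t : ℝ, |Phi (q * t) - Phi t| ≤
      (Real.sqrt (2 * Real.pi * Real.exp 1))⁻¹ * (max q q⁻¹ - 1) :=
  ciSup_le (abs_Phi_mul_sub_Phi_le hq)
end

section
/- Let (𝒵, 𝒜, G) be a probability space, let p̄, q̄ : 𝒵 → (0,∞) be measurable, set ξ := log(q̄/p̄) and W := √(q̄/p̄) − 1, and let u : 𝒵 → ℝ be measurable with E[u²] = a² for some a > 0. Fix a real exponent p > 2 and nonnegative constants φ₀, ω₀, Λ, ν₀, b such that: (i) E[(W − u/2)²] ≤ φ₀; (ii) ξ is integrable and |E[ξ] + b²/2| ≤ ω₀; (iii) (E[|W|^p])^{1/p} ≤ Λ; (iv) (E[|ξ|^{2p/(p−2)}])^{(p−2)/(2p)} ≤ ν₀, with all these moments finite. Then the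 variance of ξ under G satisfies |Var_G(ξ) − a²| ≤ 4φ₀ + 4a√φ₀ + 4(√φ₀ + a/2)·Λ·ν₀ + Λ²ν₀² + (b²/2 + ω₀)². -/
/-!
Write `ξ = u + (2W - u) + R` with `R = ξ - 2W`. The QMD bound controls `2W - u` in `L²`, and
since `log t = 2 log √t` the elementary bounds `1 - 1/s ≤ log s ≤ s - 1` give `|R| ≤ |W ξ|`
pointwise, so Hölder with `1/p + (p-2)/(2p) = 1/2` gives `‖R‖₂ ≤ Λ ν₀`. By Minkowski
`‖ξ - u‖₂ ≤ ε := 2√φ₀ + Λ ν₀`, hence `|E[ξ²] - a²| ≤ ε (2a + ε)`, and the mean bound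
`|E ξ| ≤ b²/2 + ω₀` accounts for the remaining term of the variance.
-/

open MeasureTheory Real ProbabilityTheory

section Moments

variable {α : Type*} [MeasurableSpace α] {μ : Measure α} {f g h : α → ℝ} {p q : ℝ}

lemma memLp_ofReal_of_integrable_abs_rpow (hp : 0 < p) (hf : AEStronglyMeasurable f μ)
    (h : Integrable (fun z => |f z| ^ p) μ) : MemLp f (ENNReal.ofReal p) μ := by
  have h0 : ENNReal.ofReal p ≠ 0 := by simp [hp]
  rw [← memLp_norm_rpow_iff hf h0 ENNReal.ofReal_ne_top, ENNReal.div_self h0 ENNReal.ofReal_ne_top,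
    memLp_one_iff_integrable]
  simpa [ENNReal.toReal_ofReal hp.le, norm_eq_abs] using h

lemma memLp_two_of_integrable_abs_rpow [IsFiniteMeasure μ] (hp : 2 ≤ p)
    (hf : AEStronglyMeasurable f μ) (h : Integrable (fun z => |f z| ^ p) μ) : MemLp f 2 μ :=
  (memLp_ofReal_of_integrable_abs_rpow (by linarith) hf h).mono_exponent
    (by simpa using ENNReal.ofReal_le_ofReal hp)

lemma abs_integral_mul_le_sqrt_mul_sqrt (hf : MemLp f 2 μ) (hg : MemLp g 2 μ) :
    |∫ z, f z * g z ∂μ| ≤ √(∫ z, f z ^ 2 ∂μ) * √(∫ z, g z ^ 2 ∂μ) := by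
  have h2 : ENNReal.ofReal 2 = 2 := ENNReal.ofReal_ofNat 2
  calc |∫ z, f z * g z ∂μ| ≤ ∫ z, ‖f z‖ * ‖g z‖ ∂μ := by
        rw [← norm_eq_abs]
        simpa only [norm_mul] using norm_integral_le_integral_norm (fun z => f z * g z)
    _ ≤ (∫ z, ‖f z‖ ^ (2 : ℝ) ∂μ) ^ (1 / (2 : ℝ)) * (∫ z, ‖g z‖ ^ (2 : ℝ) ∂μ) ^ (1 / (2 : ℝ)) :=
        integral_mul_norm_le_Lp_mul_Lq Real.HolderConjugate.two_two (h2 ▸ hf) (h2 ▸ hg)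
    _ = √(∫ z, f z ^ 2 ∂μ) * √(∫ z, g z ^ 2 ∂μ) := by
        simp only [norm_eq_abs, rpow_two, sq_abs, ← sqrt_eq_rpow]

lemma integral_add_sq (hf : MemLp f 2 μ) (hg : MemLp g 2 μ) :
    ∫ z, (f z + g z) ^ 2 ∂μ = ∫ z, f z ^ 2 ∂μ + 2 * ∫ z, f z * g z ∂μ + ∫ z, g z ^ 2 ∂μ := by
  have hfg : Integrable (fun z => f z * g z) μ := hf.integrable_mul hg
  have hsum : Integrable (fun z => f z ^ 2 + 2 * (f z * g z)) μ :=
    hf.integrable_sq.add (hfg.const_mul 2)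
  calc ∫ z, (f z + g z) ^ 2 ∂μ = ∫ z, (f z ^ 2 + 2 * (f z * g z)) + g z ^ 2 ∂μ := by
        congr 1 with z
        ring
    _ = _ := by
        rw [integral_add hsum hg.integrable_sq, integral_add hf.integrable_sq (hfg.const_mul 2),
          integral_const_mul]

lemma sqrt_integral_add_sq_le (hf : MemLp f 2 μ) (hg : MemLp g 2 μ) :
    √(∫ z, (f z + g z) ^ 2 ∂μ) ≤ √(∫ z, f z ^ 2 ∂μ) + √(∫ z, g z ^ 2 ∂μ) := by
  have hF := sq_sqrt (integral_nonneg fun z => sq_nonneg (f z) : 0 ≤ ∫ z, f z ^ 2 ∂μ)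
  have hG := sq_sqrt (integral_nonneg fun z => sq_nonneg (g z) : 0 ≤ ∫ z, g z ^ 2 ∂μ)
  have hfg := (abs_le.1 (abs_integral_mul_le_sqrt_mul_sqrt hf hg)).2
  rw [sqrt_le_iff, integral_add_sq hf hg]
  exact ⟨by positivity, by nlinarith⟩

lemma abs_integral_sq_sub_integral_sq_le (hf : MemLp f 2 μ) (hg : MemLp g 2 μ) :
    |∫ z, f z ^ 2 ∂μ - ∫ z, g z ^ 2 ∂μ| ≤
      √(∫ z, (f z - g z) ^ 2 ∂μ) * (2 * √(∫ z, g z ^ 2 ∂μ) + √(∫ z, (f z - g z) ^ 2 ∂μ)) := by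
  have hexp := integral_add_sq hg (hf.sub hg)
  simp only [Pi.sub_apply, add_sub_cancel] at hexp
  have hH := mul_self_sqrt (integral_nonneg fun z => sq_nonneg (f z - g z) :
    0 ≤ ∫ z, (f z - g z) ^ 2 ∂μ)
  have hI := abs_le.1 (abs_integral_mul_le_sqrt_mul_sqrt hg (hf.sub hg))
  simp only [Pi.sub_apply] at hI
  rw [hexp, abs_le]
  constructor <;> nlinarith [hI.1, hI.2]

lemma sq_rpow_div_two (x r : ℝ) : (x ^ 2) ^ (r / 2) = |x| ^ r := by
  rw [← sq_abs, ← rpow_natCast_mul (abs_nonneg x)]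
  norm_num [mul_div_cancel₀]

lemma memLp_two_mul_of_holderTriple (hpq : p.HolderTriple q 2) (hf : AEStronglyMeasurable f μ)
    (hg : AEStronglyMeasurable g μ) (hfp : Integrable (fun z => |f z| ^ p) μ)
    (hgq : Integrable (fun z => |g z| ^ q) μ) : MemLp (fun z => f z * g z) 2 μ := by
  have := hpq.ennrealOfReal
  simpa using (memLp_ofReal_of_integrable_abs_rpow hpq.symm.pos hg hgq).mul'
    (r := ENNReal.ofReal 2) (memLp_ofReal_of_integrable_abs_rpow hpq.pos hf hfp)

lemma integral_sq_mul_le_of_holderTriple (hpq : p.HolderTriple q 2)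
    (hf : AEStronglyMeasurable f μ) (hg : AEStronglyMeasurable g μ)
    (hfp : Integrable (fun z => |f z| ^ p) μ) (hgq : Integrable (fun z => |g z| ^ q) μ) :
    ∫ z, (f z * g z) ^ 2 ∂μ ≤
      ((∫ z, |f z| ^ p ∂μ) ^ (1 / p)) ^ 2 * ((∫ z, |g z| ^ q ∂μ) ^ (1 / q)) ^ 2 := by
  have hfp' : MemLp (fun z => f z ^ 2) (ENNReal.ofReal (p / 2)) μ :=
    memLp_ofReal_of_integrable_abs_rpow (by linarith [hpq.lt]) (hf.pow 2)
      (by simpa only [abs_sq, sq_rpow_div_two] using hfp)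
  have hgq' : MemLp (fun z => g z ^ 2) (ENNReal.ofReal (q / 2)) μ :=
    memLp_ofReal_of_integrable_abs_rpow (by linarith [hpq.symm.lt]) (hg.pow 2)
      (by simpa only [abs_sq, sq_rpow_div_two] using hgq)
  have key := integral_mul_le_Lp_mul_Lq_of_nonneg hpq.holderConjugate_div_div
    (ae_of_all _ fun z => sq_nonneg (f z)) (ae_of_all _ fun z => sq_nonneg (g z)) hfp' hgq'
  simp only [sq_rpow_div_two, one_div_div] at key
  have hX : 0 ≤ ∫ z, |f z| ^ p ∂μ := integral_nonneg fun _ => by positivity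
  have hY : 0 ≤ ∫ z, |g z| ^ q ∂μ := integral_nonneg fun _ => by positivity
  calc ∫ z, (f z * g z) ^ 2 ∂μ = ∫ z, f z ^ 2 * g z ^ 2 ∂μ := by simp only [mul_pow]
    _ ≤ _ := key
    _ = _ := by
        rw [← rpow_mul_natCast hX, ← rpow_mul_natCast hY]
        norm_num [div_eq_mul_inv, mul_comm]

lemma sqrt_integral_sq_le_of_abs_le_abs_mul (hpq : p.HolderTriple q 2)
    (hf : AEStronglyMeasurable f μ) (hg : AEStronglyMeasurable g μ)
    (hfp : Integrable (fun z => |f z| ^ p) μ) (hgq : Integrable (fun z => |g z| ^ q) μ)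
    (hle : ∀ z, |h z| ≤ |f z * g z|) :
    √(∫ z, h z ^ 2 ∂μ) ≤ (∫ z, |f z| ^ p ∂μ) ^ (1 / p) * (∫ z, |g z| ^ q ∂μ) ^ (1 / q) := by
  refine sqrt_le_iff.2 ⟨by positivity, ?_⟩
  calc ∫ z, h z ^ 2 ∂μ ≤ ∫ z, (f z * g z) ^ 2 ∂μ :=
        integral_mono_of_nonneg (ae_of_all _ fun z => sq_nonneg (h z))
          (memLp_two_mul_of_holderTriple hpq hf hg hfp hgq).integrable_sq
          (ae_of_all _ fun z => sq_le_sq.2 (hle z))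
    _ ≤ _ := integral_sq_mul_le_of_holderTriple hpq hf hg hfp hgq
    _ = _ := (mul_pow _ _ 2).symm

lemma abs_variance_sub_sq_le [IsProbabilityMeasure μ] {a ε m : ℝ} (hf : MemLp f 2 μ)
    (hg : MemLp g 2 μ) (ha : 0 ≤ a) (hga : ∫ z, g z ^ 2 ∂μ = a ^ 2)
    (hε : √(∫ z, (f z - g z) ^ 2 ∂μ) ≤ ε) (hm : |∫ z, f z ∂μ| ≤ m) :
    |variance f μ - a ^ 2| ≤ ε * (2 * a + ε) + m ^ 2 := by
  have hsecond : |∫ z, f z ^ 2 ∂μ - a ^ 2| ≤ ε * (2 * a + ε) := by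
    have h := abs_integral_sq_sub_integral_sq_le hf hg
    rw [hga, sqrt_sq ha] at h
    refine h.trans ?_
    have := (sqrt_nonneg _).trans hε
    gcongr
  have hmean := sq_le_sq' (abs_le.1 hm).1 (abs_le.1 hm).2
  rw [abs_le] at hsecond
  rw [variance_eq_sub hf, abs_le]
  simp only [Pi.pow_apply]
  constructor <;> nlinarith [sq_nonneg (∫ z, f z ∂μ)]

end Moments

lemma abs_log_sub_two_mul_sqrt_sub_one_le {t : ℝ} (ht : 0 < t) :
    |log t - 2 * (√t - 1)| ≤ |(√t - 1) * log t| := by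
  have hs : 0 < √t := sqrt_pos.2 ht
  have hlog : log t = 2 * log √t := by
    rw [log_sqrt ht.le]
    ring
  have hupper := log_le_sub_one_of_pos hs
  have hlower := one_sub_inv_le_log_of_pos hs
  have hlower' : √t - 1 ≤ √t * log √t := by
    have := mul_le_mul_of_nonneg_left hlower hs.le
    rwa [mul_sub, mul_one, mul_inv_cancel₀ hs.ne'] at this
  rw [hlog, abs_of_nonpos (by linarith), abs_of_nonneg (by nlinarith)]
  nlinarith

theorem variance_loglik_ratio_expansion_general
    {𝒵 : Type*} [MeasurableSpace 𝒵] (G : Measure 𝒵) [IsProbabilityMeasure G]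
    (pbar qbar : 𝒵 → ℝ) (hpbar : Measurable pbar) (hqbar : Measurable qbar)
    (hppos : ∀ z, 0 < pbar z) (hqpos : ∀ z, 0 < qbar z)
    (ξ W : 𝒵 → ℝ)
    (hξ : ξ = fun z => Real.log (qbar z / pbar z))
    (hW : W = fun z => Real.sqrt (qbar z / pbar z) - 1)
    (u : 𝒵 → ℝ) (hu : Measurable u) (a : ℝ) (ha : 0 < a)
    (hu2int : Integrable (fun z => (u z) ^ 2) G)
    (hua : ∫ z, (u z) ^ 2 ∂G = a ^ 2)
    (p : ℝ) (hp : 2 < p)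
    (φ₀ ω₀ Λ ν₀ b : ℝ)
    (hφ₀ : 0 ≤ φ₀) (hΛ : 0 ≤ Λ)
    (hQMD : ∫ z, (W z - u z / 2) ^ 2 ∂G ≤ φ₀)
    (hmean : |(∫ z, ξ z ∂G) + b ^ 2 / 2| ≤ ω₀)
    (hWpint : Integrable (fun z => |W z| ^ p) G)
    (hWp : (∫ z, |W z| ^ p ∂G) ^ (1 / p) ≤ Λ)
    (hξqint : Integrable (fun z => |ξ z| ^ (2 * p / (p - 2))) G)
    (hξq : (∫ z, |ξ z| ^ (2 * p / (p - 2)) ∂G) ^ ((p - 2) / (2 * p)) ≤ ν₀) :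
    |variance ξ G - a ^ 2| ≤
      4 * φ₀ + 4 * a * Real.sqrt φ₀ + 4 * (Real.sqrt φ₀ + a / 2) * Λ * ν₀
        + Λ ^ 2 * ν₀ ^ 2 + (b ^ 2 / 2 + ω₀) ^ 2 := by
  have hpq : p.HolderTriple (2 * p / (p - 2)) 2 :=
    ⟨by field_simp; ring, by linarith, div_pos (by linarith) (by linarith)⟩
  have hWm : AEStronglyMeasurable W G :=
    hW ▸ ((hqbar.div hpbar).sqrt.sub_const 1).aestronglyMeasurable
  have hξm : AEStronglyMeasurable ξ G := hξ ▸ (hqbar.div hpbar).log.aestronglyMeasurable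
  have hWL2 : MemLp W 2 G := memLp_two_of_integrable_abs_rpow hpq.lt.le hWm hWpint
  have hξL2 : MemLp ξ 2 G := memLp_two_of_integrable_abs_rpow hpq.symm.lt.le hξm hξqint
  have huL2 : MemLp u 2 G := (memLp_two_iff_integrable_sq hu.aestronglyMeasurable).2 hu2int
  have hpointwise (z : 𝒵) : |ξ z - 2 * W z| ≤ |W z * ξ z| := by
    simpa only [hξ, hW] using abs_log_sub_two_mul_sqrt_sub_one_le (div_pos (hqpos z) (hppos z))
  have hR : √(∫ z, (ξ z - 2 * W z) ^ 2 ∂G) ≤ Λ * ν₀ := by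
    refine (sqrt_integral_sq_le_of_abs_le_abs_mul hpq hWm hξm hWpint hξqint hpointwise).trans ?_
    rw [one_div_div]
    gcongr
  have hD : √(∫ z, (2 * W z - u z) ^ 2 ∂G) ≤ 2 * √φ₀ := by
    rw [show (fun z => (2 * W z - u z) ^ 2) = fun z => 2 ^ 2 * (W z - u z / 2) ^ 2 by ext z; ring,
      integral_const_mul, sqrt_mul (by norm_num), sqrt_sq zero_le_two]
    gcongr
  have hdiff : √(∫ z, (ξ z - u z) ^ 2 ∂G) ≤ 2 * √φ₀ + Λ * ν₀ := by
    calc √(∫ z, (ξ z - u z) ^ 2 ∂G) = √(∫ z, ((2 * W z - u z) + (ξ z - 2 * W z)) ^ 2 ∂G) := by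
          congr 2 with z
          ring
      _ ≤ _ := sqrt_integral_add_sq_le ((hWL2.const_mul 2).sub huL2) (hξL2.sub (hWL2.const_mul 2))
      _ ≤ _ := add_le_add hD hR
  have hmean_abs : |∫ z, ξ z ∂G| ≤ b ^ 2 / 2 + ω₀ := by
    rw [abs_le] at hmean ⊢
    constructor <;> linarith [sq_nonneg b]
  calc |variance ξ G - a ^ 2|
      ≤ (2 * √φ₀ + Λ * ν₀) * (2 * a + (2 * √φ₀ + Λ * ν₀)) + (b ^ 2 / 2 + ω₀) ^ 2 :=
        abs_variance_sub_sq_le hξL2 huL2 ha.le hua hdiff hmean_abs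
    _ = _ := by linear_combination 4 * sq_sqrt hφ₀

/-- Variance expansion for the log-likelihood ratio `ξ = log(q̄/p̄)` under QMD-type and
Hölder-type moment bounds: `|Var(ξ) − a²| ≤ 4φ₀ + 4a√φ₀ + 4(√φ₀ + a/2)Λν₀ + Λ²ν₀² + (b²/2 + ω₀)²`. -/
theorem variance_loglik_ratio_expansion
    {𝒵 : Type*} [MeasurableSpace 𝒵] (G : Measure 𝒵) [IsProbabilityMeasure G]
    (pbar qbar : 𝒵 → ℝ) (hpbar : Measurable pbar) (hqbar : Measurable qbar)
    (hppos : ∀ z, 0 < pbar z) (hqpos : ∀ z, 0 < qbar z)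
    (ξ W : 𝒵 → ℝ)
    (hξ : ξ = fun z => Real.log (qbar z / pbar z))
    (hW : W = fun z => Real.sqrt (qbar z / pbar z) - 1)
    (u : 𝒵 → ℝ) (hu : Measurable u) (a : ℝ) (ha : 0 < a)
    (hu2int : Integrable (fun z => (u z) ^ 2) G)
    (hua : ∫ z, (u z) ^ 2 ∂G = a ^ 2)
    (p : ℝ) (hp : 2 < p)
    (φ₀ ω₀ Λ ν₀ b : ℝ)
    (hφ₀ : 0 ≤ φ₀) (hω₀ : 0 ≤ ω₀) (hΛ : 0 ≤ Λ) (hν₀ : 0 ≤ ν₀) (hb : 0 ≤ b)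
    (hQMDint : Integrable (fun z => (W z - u z / 2) ^ 2) G)
    (hQMD : ∫ z, (W z - u z / 2) ^ 2 ∂G ≤ φ₀)
    (hmeanint : Integrable ξ G)
    (hmean : |(∫ z, ξ z ∂G) + b ^ 2 / 2| ≤ ω₀)
    (hWpint : Integrable (fun z => |W z| ^ p) G)
    (hWp : (∫ z, |W z| ^ p ∂G) ^ (1 / p) ≤ Λ)
    (hξqint : Integrable (fun z => |ξ z| ^ (2 * p / (p - 2))) G)
    (hξq : (∫ z, |ξ z| ^ (2 * p / (p - 2)) ∂G) ^ ((p - 2) / (2 * p)) ≤ ν₀) :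
    |variance ξ G - a ^ 2| ≤
      4 * φ₀ + 4 * a * Real.sqrt φ₀ + 4 * (Real.sqrt φ₀ + a / 2) * Λ * ν₀
        + Λ ^ 2 * ν₀ ^ 2 + (b ^ 2 / 2 + ω₀) ^ 2 :=
  variance_loglik_ratio_expansion_general G pbar qbar hpbar hqbar hppos hqpos ξ W hξ hW u hu a ha
    hu2int hua p hp φ₀ ω₀ Λ ν₀ b hφ₀ hΛ hQMD hmean hWpint hWp hξqint hξq
end

section
/- Let M > 0 and R ≥ 0 be real random variables on a probability space, let α ∈ (0,1), and let ε > 0. Then E[Φ(log(1/α)/M + M·R/2)] ≥ min{Φ(log(1/α)/ε), Φ(1/(2ε))} − P({M ≥ ε} ∩ {M·R ≤ 1/ε}). -/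
/-!
Off the event `{M ≥ ε, M R ≤ 1/ε}` either `M < ε`, so that `log(1/α)/M ≥ log(1/α)/ε`, or
`M R > 1/ε`, so that `M R/2 > 1/(2ε)`; as both summands are nonnegative and `Φ` is monotone,
the integrand is there at least `min{Φ(log(1/α)/ε), Φ(1/(2ε))}`. On the event it is at least
`0 ≥ min{…} - 1`, and integrating gives the bound.
-/

open MeasureTheory Real

open ProbabilityTheory

lemma Phi_eq_cdf_gaussianReal : Phi = cdf (gaussianReal 0 1) := by
  funext t
  rw [cdf_eq_real, measureReal_def, gaussianReal_apply_eq_integral _ one_ne_zero,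
    ENNReal.toReal_ofReal (setIntegral_nonneg measurableSet_Iic
      fun x _ ↦ gaussianPDFReal_nonneg 0 1 x), Phi]
  simp only [gaussianPDFReal, integral_const_mul, NNReal.coe_one, mul_one, sub_zero]

lemma Phi_nonneg (t : ℝ) : 0 ≤ Phi t := Phi_eq_cdf_gaussianReal ▸ cdf_nonneg _ t

lemma Phi_le_one (t : ℝ) : Phi t ≤ 1 := Phi_eq_cdf_gaussianReal ▸ cdf_le_one _ t

lemma monotone_Phi : Monotone Phi := Phi_eq_cdf_gaussianReal ▸ monotone_cdf _

lemma integrable_Phi_comp {Ω : Type*} [MeasurableSpace Ω] {μ : Measure Ω} [IsFiniteMeasure μ]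
    {X : Ω → ℝ} (hX : AEMeasurable X μ) : Integrable (fun ω ↦ Phi (X ω)) μ :=
  .of_bound (monotone_Phi.measurable.comp_aemeasurable hX).aestronglyMeasurable 1 <|
    .of_forall fun ω ↦ by
      rw [norm_of_nonneg (Phi_nonneg _)]
      exact Phi_le_one _

lemma sub_measureReal_le_integral {Ω : Type*} [MeasurableSpace Ω] {μ : Measure Ω}
    [IsProbabilityMeasure μ] {f : Ω → ℝ} {A : Set Ω} {c : ℝ} (hA : MeasurableSet A)
    (hf : Integrable f μ) (hf0 : 0 ≤ᵐ[μ] f) (hc : c ≤ 1) (hAc : ∀ᵐ ω ∂μ, ω ∉ A → c ≤ f ω) :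
    c - μ.real A ≤ ∫ ω, f ω ∂μ := by
  have hind : Integrable (A.indicator (1 : Ω → ℝ)) μ := (integrable_const 1).indicator hA
  calc c - μ.real A = ∫ ω, (c - A.indicator 1 ω) ∂μ := by
        rw [integral_sub (integrable_const c) hind, integral_indicator_one hA]
        simp
    _ ≤ ∫ ω, f ω ∂μ := by
        refine integral_mono_ae ((integrable_const c).sub hind) hf ?_
        filter_upwards [hf0, hAc] with ω hω0 hωA
        by_cases hω : ω ∈ A
        · simp only [Set.indicator_of_mem hω, Pi.one_apply]
          linarith [show (0 : ℝ) ≤ f ω from hω0]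
        · simpa [Set.indicator_of_notMem hω] using hωA hω

lemma min_le_apply_div_add_mul_div_two {g : ℝ → ℝ} (hg : Monotone g) {L ε m r : ℝ} (hL : 0 ≤ L)
    (hm : 0 < m) (hr : 0 ≤ r) (h : m < ε ∨ 1 / ε < m * r) :
    min (g (L / ε)) (g (1 / (2 * ε))) ≤ g (L / m + m * r / 2) := by
  rcases h with hmε | hmr
  · refine (min_le_left _ _).trans (hg ?_)
    have : L / ε ≤ L / m := by gcongr
    linarith [show 0 ≤ m * r / 2 by positivity]
  · refine (min_le_right _ _).trans (hg ?_)
    have : 1 / (2 * ε) ≤ m * r / 2 := by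
      rw [show 1 / (2 * ε) = (1 / ε) / 2 by ring]
      linarith
    linarith [show 0 ≤ L / m by positivity]

theorem universal_inference_extreme_conservativeness_core_general
    {Ω : Type*} [MeasurableSpace Ω] (P : Measure Ω) [IsProbabilityMeasure P]
    (M R : Ω → ℝ) (hM : Measurable M) (hR : Measurable R)
    (hMpos : ∀ᵐ ω ∂P, 0 < M ω) (hRnonneg : ∀ᵐ ω ∂P, 0 ≤ R ω)
    (α : ℝ) (hα0 : 0 < α) (hα1 : α < 1) (ε : ℝ) :
    min (Phi (Real.log (1 / α) / ε)) (Phi (1 / (2 * ε)))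
        - (P ({ω | ε ≤ M ω} ∩ {ω | M ω * R ω ≤ 1 / ε})).toReal ≤
      ∫ ω, Phi (Real.log (1 / α) / M ω + M ω * R ω / 2) ∂P := by
  have hlog : 0 ≤ Real.log (1 / α) := Real.log_nonneg (by rw [le_div_iff₀ hα0]; linarith)
  refine sub_measureReal_le_integral
    ((measurableSet_le measurable_const hM).inter (measurableSet_le (hM.mul hR) measurable_const))
    (integrable_Phi_comp ((measurable_const.div hM).add ((hM.mul hR).div_const 2)).aemeasurable)
    (.of_forall fun ω ↦ Phi_nonneg _) ((min_le_left _ _).trans (Phi_le_one _)) ?_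
  filter_upwards [hMpos, hRnonneg] with ω hMω hRω hω
  refine min_le_apply_div_add_mul_div_two monotone_Phi hlog hMω hRω ?_
  simpa only [Set.mem_inter_iff, Set.mem_ofPred_eq, not_and_or, not_le] using hω

/-- Core bound of Corollary 1: for random variables `M > 0` and `R ≥ 0`, `α ∈ (0,1)`,
`ε > 0`, `E[Φ(log(1/α)/M + M R/2)] ≥ min{Φ(log(1/α)/ε), Φ(1/(2ε))} − P(M ≥ ε, M R ≤ 1/ε)`. -/
theorem universal_inference_extreme_conservativeness_core
    {Ω : Type*} [MeasurableSpace Ω] (P : Measure Ω) [IsProbabilityMeasure P]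
    (M R : Ω → ℝ) (hM : Measurable M) (hR : Measurable R)
    (hMpos : ∀ᵐ ω ∂P, 0 < M ω) (hRnonneg : ∀ᵐ ω ∂P, 0 ≤ R ω)
    (α : ℝ) (hα0 : 0 < α) (hα1 : α < 1) (ε : ℝ) (hε : 0 < ε) :
    min (Phi (Real.log (1 / α) / ε)) (Phi (1 / (2 * ε)))
        - (P ({ω | ε ≤ M ω} ∩ {ω | M ω * R ω ≤ 1 / ε})).toReal ≤
      ∫ ω, Phi (Real.log (1 / α) / M ω + M ω * R ω / 2) ∂P :=
  universal_inference_extreme_conservativeness_core_general P M R hM hR hMpos hRnonneg α hα0 hα1 ε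
end
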